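/- arXiv:2512.13865 — 3 statements merged into one kernel-verified Lean document; each statement's English description precedes it below -/
import Mathlib

section
/- Let V be a finite-dimensional real vector space with a filtration 0 ⊊ V^{≤-λ₁} ⊊ ⋯ ⊊ V^{≤-λₙ} = V indexed by strictly positive reals λ₁ > ⋯ > λₙ > 0 (so all weights are strictly negative). Then the space Poly(V,V)^{≤0} of subresonant polynomial self-maps of V (polynomial maps F such that for every linear functional ξ of filtration weight ≤ λ, the pullback F*ξ has filtration weight ≤ λ in Sym•(V*)) is a finite-dimensional vector space. -/
/-!
Since every dual weight is positive, a monomial `x^d` of weight at most `c` satisfies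
`dᵢ · wᵢ ≤ c` for each `i`, so each exponent is bounded by `c / wᵢ`. Hence every weight
filtration piece `Sym•(V*)^{≤ c}` sits inside the finite-dimensional space of polynomials of
bounded degree in each variable, and `Poly(V,V)^{≤0}` is a finite product of such pieces.
-/

open MvPolynomial

noncomputable section

/-- The total (dual) weight of a monomial `∏ xᵢ^{dᵢ}` : `∑ dᵢ · w i`. -/
def monWeight {n : ℕ} (w : Fin n → ℝ) (d : Fin n →₀ ℕ) : ℝ :=
  d.sum fun i k => (k : ℝ) * w i

/-- The subspace `Sym•(V*)^{≤ c}` of polynomials all of whose monomials have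
total dual weight `≤ c`. -/
def weightLE {n : ℕ} (w : Fin n → ℝ) (c : ℝ) : Submodule ℝ (MvPolynomial (Fin n) ℝ) where
  carrier := {p | ∀ d : Fin n →₀ ℕ, c < monWeight w d → coeff d p = 0}
  zero_mem' := fun d _ => coeff_zero d
  add_mem' := by
    intro p q hp hq d hd
    rw [coeff_add, hp d hd, hq d hd, add_zero]
  smul_mem' := by
    intro c' p hp d hd
    rw [coeff_smul, hp d hd, smul_zero]

/-- `Poly(V,V)^{≤0}`: polynomial self-maps `F = (F_j)_j` such that the pullback of
the weight-`w j` coordinate functional has weight `≤ w j`, i.e. every monomial of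
`F j` has weight `≤ w j`. -/
def subresonantSpace {n : ℕ} (w : Fin n → ℝ) :
    Submodule ℝ (Fin n → MvPolynomial (Fin n) ℝ) :=
  Submodule.pi Set.univ fun j => weightLE w (w j)

section

variable {n : ℕ} {w : Fin n → ℝ}

theorem monWeight_eq_sum (d : Fin n →₀ ℕ) :
    monWeight w d = ∑ i, (d i : ℝ) * w i :=
  Finsupp.sum_fintype _ _ fun i => by rw [Nat.cast_zero, zero_mul]

theorem mul_le_monWeight (hw : ∀ i, 0 ≤ w i) (d : Fin n →₀ ℕ) (i : Fin n) :
    (d i : ℝ) * w i ≤ monWeight w d := by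
  rw [monWeight_eq_sum]
  exact Finset.single_le_sum (fun j _ => mul_nonneg (Nat.cast_nonneg _) (hw j))
    (Finset.mem_univ i)

theorem weightLE_le_restrictDegree (hw : ∀ i, 0 < w i) (c : ℝ) :
    weightLE w c ≤ restrictDegree (Fin n) ℝ (Finset.univ.sup fun i => ⌊c / w i⌋₊) := by
  intro p hp
  rw [mem_restrictDegree]
  intro d hd i
  have hdc : monWeight w d ≤ c := not_lt.mp fun h => mem_support_iff.mp hd (hp d h)
  have hdi : (d i : ℝ) ≤ c / w i := by
    rw [le_div_iff₀ (hw i)]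
    exact (mul_le_monWeight (fun j => (hw j).le) d i).trans hdc
  exact (Nat.le_floor hdi).trans
    (Finset.le_sup (f := fun i => ⌊c / w i⌋₊) (Finset.mem_univ i))

theorem weightLE_finiteDimensional (hw : ∀ i, 0 < w i) (c : ℝ) :
    FiniteDimensional ℝ (weightLE w c) :=
  Submodule.finiteDimensional_of_le (weightLE_le_restrictDegree hw c)

end

/-- If all weights are strictly negative (all dual weights `w i` strictly positive),
then the space of subresonant polynomial self-maps is finite-dimensional. -/
theorem subresonantSpace_finiteDimensional {n : ℕ} (w : Fin n → ℝ) (hw : ∀ i, 0 < w i) :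
    FiniteDimensional ℝ (subresonantSpace w) :=
  Module.Finite.iff_fg.mpr <| Submodule.fg_pi fun j =>
    Module.Finite.iff_fg.mp (weightLE_finiteDimensional hw (w j))

end
end

section
/- With V a filtered vector space with strictly negative weights, the set Poly(V,V)^{≤0} of subresonant polynomial self-maps is closed under composition: if F, G ∈ Poly(V,V)^{≤0} then F ∘ G ∈ Poly(V,V)^{≤0}. -/
/-!
Statement 1: For a filtered vector space with strictly negative weights, the set
`Poly(V,V)^{≤0}` of subresonant polynomial self-maps is closed under composition.
-/

open MvPolynomial

noncomputable section

/-- `F ∈ Poly(V,V)^{≤0}`: every monomial occurring in the `j`-th component of `F`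
has total dual weight at most `w j` (the dual weight of the `j`-th coordinate). -/
def Subresonant {n : ℕ} (w : Fin n → ℝ) (F : Fin n → MvPolynomial (Fin n) ℝ) : Prop :=
  ∀ j, ∀ d : Fin n →₀ ℕ, w j < monWeight w d → coeff d (F j) = 0

/-- Composition of polynomial self-maps: substitute `G` into `F`. -/
def polyComp {n : ℕ} (F G : Fin n → MvPolynomial (Fin n) ℝ) :
    Fin n → MvPolynomial (Fin n) ℝ :=
  fun j => bind₁ G (F j)

/-- Auxiliary predicate: all monomials of `p` have weight at most `c`. -/
def SR {n : ℕ} (w : Fin n → ℝ) (c : ℝ) (p : MvPolynomial (Fin n) ℝ) : Prop :=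
  ∀ e : Fin n →₀ ℕ, c < monWeight w e → coeff e p = 0

lemma monWeight_zero {n : ℕ} (w : Fin n → ℝ) : monWeight w 0 = 0 := by
  simp [monWeight]

lemma monWeight_add {n : ℕ} (w : Fin n → ℝ) (d d' : Fin n →₀ ℕ) :
    monWeight w (d + d') = monWeight w d + monWeight w d' := by
  unfold monWeight
  rw [Finsupp.sum_add_index] <;> intros <;> push_cast <;> ring

lemma SR_mono {n : ℕ} {w : Fin n → ℝ} {c c' : ℝ} {p : MvPolynomial (Fin n) ℝ}
    (h : c ≤ c') (hp : SR w c p) : SR w c' p :=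
  fun e he => hp e (lt_of_le_of_lt h he)

lemma SR_one {n : ℕ} (w : Fin n → ℝ) : SR w 0 1 := by
  intro e he
  rw [coeff_one]
  have : e ≠ 0 := by
    rintro rfl; rw [monWeight_zero] at he; exact lt_irrefl 0 he
  simp [Ne.symm this]

lemma SR_mul {n : ℕ} {w : Fin n → ℝ} {c c' : ℝ} {p q : MvPolynomial (Fin n) ℝ}
    (hp : SR w c p) (hq : SR w c' q) : SR w (c + c') (p * q) := by
  intro e he
  rw [coeff_mul]
  apply Finset.sum_eq_zero
  rintro ⟨a, b⟩ hab
  rw [Finset.HasAntidiagonal.mem_antidiagonal] at hab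
  have hsum : monWeight w a + monWeight w b = monWeight w e := by
    rw [← monWeight_add, hab]
  by_cases ha : c < monWeight w a
  · simp [hp a ha]
  · have : c' < monWeight w b := by push_neg at ha; linarith
    simp [hq b this]

lemma SR_pow {n : ℕ} {w : Fin n → ℝ} {c : ℝ} {p : MvPolynomial (Fin n) ℝ}
    (hp : SR w c p) : ∀ k : ℕ, SR w (k * c) (p ^ k) := by
  intro k
  induction k with
  | zero => simpa using SR_one w
  | succ m ih =>
    have h2 : ((m + 1 : ℕ) : ℝ) * c = ↑m * c + c := by push_cast; ring
    rw [pow_succ, h2]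
    exact SR_mul ih hp

/-- Subresonant polynomial maps are closed under composition. -/
theorem subresonant_comp {n : ℕ} (w : Fin n → ℝ) (hw : ∀ i, 0 < w i)
    (F G : Fin n → MvPolynomial (Fin n) ℝ)
    (hF : Subresonant w F) (hG : Subresonant w G) :
    Subresonant w (polyComp F G) := by
  intro j d hd
  unfold polyComp
  have key : SR w (w j) (bind₁ G (F j)) := by
    rw [bind₁, aeval_def, eval₂_eq]
    intro e he
    rw [coeff_sum]
    apply Finset.sum_eq_zero
    intro dd hdd
    by_cases hc : w j < monWeight w dd
    · simp [algebraMap_eq, coeff_C_mul, hF j dd hc]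
    · push_neg at hc
      have hprod : SR w (monWeight w dd) (∏ i ∈ dd.support, (G i) ^ dd i) := by
        have : monWeight w dd = ∑ i ∈ dd.support, (dd i : ℝ) * w i := rfl
        rw [this]
        clear hc this he hdd
        induction dd.support using Finset.induction with
        | empty => simpa using SR_one w
        | @insert a s hx ih =>
          rw [Finset.prod_insert hx, Finset.sum_insert hx]
          exact SR_mul (SR_pow (fun e' he' => hG a e' he') (dd a)) ih
      have := hprod e (lt_of_le_of_lt hc he)
      simp [algebraMap_eq, coeff_C_mul, this]
  exact key d hd


end
end

section
/- Let V be a filtered vector space with strictly negative weights and let F ∈ G^{sr}(V) be an invertible subresonant polynomial map. Then the linear part A := D₀F of F at the origin preserves the filtration: A(V^{≤-λ}) = V^{≤-λ} for every filtration step, and the map G^{sr}(V) → GL(V), F ↦ D₀F, is a group homomorphism with kernel G^{ssr}(V); in particular G^{ssr}(V) is a normal subgroup of G^{sr}(V). -/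
/-!
Statement 18: For `F ∈ G^{sr}(V)`, the linear part `A = D₀F` preserves the
filtration (`A(V^{≤-λ}) = V^{≤-λ}`), is invertible, and `F ↦ D₀F` is a group
homomorphism with kernel `G^{ssr}(V)`; in particular `G^{ssr}(V)` is normal in
`G^{sr}(V)`.  As flagged in the source, `D₀F` is taken in the graded sense: the
weight-0 graded component `grPart` of the polynomial map, which is multiplicative
under composition; its genuinely linear coefficient matrix `linPart` preserves the
filtration and is invertible.
-/

open MvPolynomial

noncomputable section

/-- `F - id ∈ Poly(V,V)^{<0}`, i.e. `D₀F = id` in the graded sense. -/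
def StrictlySubresonant {n : ℕ} (w : Fin n → ℝ) (F : Fin n → MvPolynomial (Fin n) ℝ) : Prop :=
  Subresonant w F ∧ ∀ j, ∀ d : Fin n →₀ ℕ, w j ≤ monWeight w d → coeff d (F j - X j) = 0

def idMap {n : ℕ} : Fin n → MvPolynomial (Fin n) ℝ := fun j => X j

def Gsr {n : ℕ} (w : Fin n → ℝ) : Set (Fin n → MvPolynomial (Fin n) ℝ) :=
  {F | Subresonant w F ∧ ∃ G, Subresonant w G ∧ polyComp F G = idMap ∧ polyComp G F = idMap}

def Gssr {n : ℕ} (w : Fin n → ℝ) : Set (Fin n → MvPolynomial (Fin n) ℝ) :=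
  {F | F ∈ Gsr w ∧ StrictlySubresonant w F}

/-- The matrix of linear coefficients of `F` (the derivative of `F` at `0`). -/
def linPart {n : ℕ} (F : Fin n → MvPolynomial (Fin n) ℝ) : Matrix (Fin n) (Fin n) ℝ :=
  fun j i => coeff (Finsupp.single i 1) (F j)

open Classical in
/-- The weight-graded degree-0 part of `F`: in each component keep only monomials of
weight exactly `w j`.  This is the graded-sense `D₀F`. -/
def grPart {n : ℕ} (w : Fin n → ℝ) (F : Fin n → MvPolynomial (Fin n) ℝ) :
    Fin n → MvPolynomial (Fin n) ℝ :=
  fun j => ∑ d ∈ (F j).support,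
    if monWeight w d = w j then monomial d (coeff d (F j)) else 0

/-- The filtration step `V^{≤-λ}`: coordinates of dual weight `≥ λ`. -/
def filStep {n : ℕ} (w : Fin n → ℝ) (lam : ℝ) : Submodule ℝ (Fin n → ℝ) where
  carrier := {v | ∀ i, w i < lam → v i = 0}
  zero_mem' := fun _ _ => rfl
  add_mem' := by
    intro a b ha hb i hi
    simp [Pi.add_apply, ha i hi, hb i hi]
  smul_mem' := by
    intro c a ha i hi
    simp [Pi.smul_apply, ha i hi]
namespace SR18
open MvPolynomial Finset

variable {n : ℕ}

lemma monWeight_add (w : Fin n → ℝ) (d e : Fin n →₀ ℕ) :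
    monWeight w (d + e) = monWeight w d + monWeight w e := by
  classical
  unfold monWeight
  rw [Finsupp.sum_add_index']
  · intro i; simp
  · intro i a b; push_cast; ring

lemma monWeight_zero (w : Fin n → ℝ) : monWeight w (0 : Fin n →₀ ℕ) = 0 := by
  simp [monWeight]

lemma monWeight_single (w : Fin n → ℝ) (i : Fin n) (k : ℕ) :
    monWeight w (Finsupp.single i k) = (k : ℝ) * w i := by
  unfold monWeight
  rw [Finsupp.sum_single_index]
  simp

lemma monWeight_eq_sum (w : Fin n → ℝ) (d : Fin n →₀ ℕ) :
    monWeight w d = ∑ i, (d i : ℝ) * w i := by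
  unfold monWeight
  rw [Finsupp.sum_fintype]
  intro i; simp

/-- All monomials of `p` have weight `≤ a`. -/
def WLE (w : Fin n → ℝ) (a : ℝ) (p : MvPolynomial (Fin n) ℝ) : Prop :=
  ∀ d, a < monWeight w d → coeff d p = 0

/-- `p` is weight-homogeneous of weight `a`. -/
def WHom (w : Fin n → ℝ) (a : ℝ) (p : MvPolynomial (Fin n) ℝ) : Prop :=
  ∀ d, coeff d p ≠ 0 → monWeight w d = a

/-- `p` and `q` have the same top (weight-`a`) part and everything else lower. -/
def TopEq (w : Fin n → ℝ) (a : ℝ) (p q : MvPolynomial (Fin n) ℝ) : Prop :=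
  WLE w a p ∧ WLE w a q ∧ ∀ d, monWeight w d = a → coeff d p = coeff d q

lemma WLE_one (w : Fin n → ℝ) : WLE w 0 (1 : MvPolynomial (Fin n) ℝ) := by
  intro d hd
  rw [MvPolynomial.coeff_one]
  split_ifs with h
  · subst h; rw [monWeight_zero] at hd; linarith
  · rfl

lemma WLE_mul {w : Fin n → ℝ} {a b : ℝ} {p q : MvPolynomial (Fin n) ℝ}
    (hp : WLE w a p) (hq : WLE w b q) : WLE w (a + b) (p * q) := by
  intro d hd
  rw [MvPolynomial.coeff_mul]
  apply Finset.sum_eq_zero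
  intro x hx
  rw [Finset.HasAntidiagonal.mem_antidiagonal] at hx
  have hsum : monWeight w x.1 + monWeight w x.2 = monWeight w d := by
    rw [← monWeight_add, hx]
  by_cases h1 : a < monWeight w x.1
  · rw [hp x.1 h1, zero_mul]
  · have h2 : b < monWeight w x.2 := by push_neg at h1; linarith
    rw [hq x.2 h2, mul_zero]

lemma WLE_pow {w : Fin n → ℝ} {a : ℝ} {p : MvPolynomial (Fin n) ℝ}
    (hp : WLE w a p) (k : ℕ) : WLE w ((k : ℝ) * a) (p ^ k) := by
  induction k with
  | zero => simpa using WLE_one w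
  | succ m ih =>
      have h := WLE_mul hp ih
      have : ((m : ℝ) + 1) * a = a + (m : ℝ) * a := by ring
      rw [pow_succ, mul_comm (p ^ m) p]
      push_cast
      rw [this]
      exact h

lemma WLE_prod {w : Fin n → ℝ} {ι : Type*} (s : Finset ι) (f : ι → ℝ)
    (g : ι → MvPolynomial (Fin n) ℝ) (h : ∀ i ∈ s, WLE w (f i) (g i)) :
    WLE w (∑ i ∈ s, f i) (∏ i ∈ s, g i) := by
  classical
  induction s using Finset.induction with
  | empty => simpa using WLE_one w
  | insert x s' hx ih =>
      rw [Finset.sum_insert hx, Finset.prod_insert hx]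
      exact WLE_mul (h x (Finset.mem_insert_self x s'))
        (ih fun i hi => h i (Finset.mem_insert_of_mem hi))

lemma WHom_one (w : Fin n → ℝ) : WHom w 0 (1 : MvPolynomial (Fin n) ℝ) := by
  intro d hd
  rw [MvPolynomial.coeff_one] at hd
  by_cases h : (0 : Fin n →₀ ℕ) = d
  · subst h; exact monWeight_zero w
  · simp [h] at hd

lemma WHom_mul {w : Fin n → ℝ} {a b : ℝ} {p q : MvPolynomial (Fin n) ℝ}
    (hp : WHom w a p) (hq : WHom w b q) : WHom w (a + b) (p * q) := by
  intro d hd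
  rw [MvPolynomial.coeff_mul] at hd
  obtain ⟨x, hx, hne⟩ := Finset.exists_ne_zero_of_sum_ne_zero hd
  rw [Finset.HasAntidiagonal.mem_antidiagonal] at hx
  have h1 : coeff x.1 p ≠ 0 := left_ne_zero_of_mul hne
  have h2 : coeff x.2 q ≠ 0 := right_ne_zero_of_mul hne
  rw [← hx, monWeight_add, hp x.1 h1, hq x.2 h2]

lemma WHom_pow {w : Fin n → ℝ} {a : ℝ} {p : MvPolynomial (Fin n) ℝ}
    (hp : WHom w a p) (k : ℕ) : WHom w ((k : ℝ) * a) (p ^ k) := by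
  induction k with
  | zero => simpa using WHom_one w
  | succ m ih =>
      have h := WHom_mul hp ih
      rw [pow_succ, mul_comm (p ^ m) p]
      push_cast
      have : ((m : ℝ) + 1) * a = a + (m : ℝ) * a := by ring
      rw [this]
      exact h

lemma WHom_prod {w : Fin n → ℝ} {ι : Type*} (s : Finset ι) (f : ι → ℝ)
    (g : ι → MvPolynomial (Fin n) ℝ) (h : ∀ i ∈ s, WHom w (f i) (g i)) :
    WHom w (∑ i ∈ s, f i) (∏ i ∈ s, g i) := by
  classical
  induction s using Finset.induction with
  | empty => simpa using WHom_one w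
  | insert x s' hx ih =>
      rw [Finset.sum_insert hx, Finset.prod_insert hx]
      exact WHom_mul (h x (Finset.mem_insert_self x s'))
        (ih fun i hi => h i (Finset.mem_insert_of_mem hi))

lemma TopEq_one (w : Fin n → ℝ) : TopEq w 0 (1 : MvPolynomial (Fin n) ℝ) 1 :=
  ⟨WLE_one w, WLE_one w, fun _ _ => rfl⟩

lemma TopEq_mul {w : Fin n → ℝ} {a b : ℝ} {p p' q q' : MvPolynomial (Fin n) ℝ}
    (hp : TopEq w a p p') (hq : TopEq w b q q') : TopEq w (a + b) (p * q) (p' * q') := by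
  obtain ⟨hp1, hp2, hp3⟩ := hp
  obtain ⟨hq1, hq2, hq3⟩ := hq
  refine ⟨WLE_mul hp1 hq1, WLE_mul hp2 hq2, ?_⟩
  intro d hd
  rw [MvPolynomial.coeff_mul, MvPolynomial.coeff_mul]
  apply Finset.sum_congr rfl
  intro x hx
  rw [Finset.HasAntidiagonal.mem_antidiagonal] at hx
  have hsum : monWeight w x.1 + monWeight w x.2 = a + b := by
    rw [← monWeight_add, hx, hd]
  by_cases h1 : a < monWeight w x.1
  · rw [hp1 x.1 h1, hp2 x.1 h1, zero_mul, zero_mul]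
  · push_neg at h1
    by_cases h2 : b < monWeight w x.2
    · rw [hq1 x.2 h2, hq2 x.2 h2, mul_zero, mul_zero]
    · push_neg at h2
      have e1 : monWeight w x.1 = a := by linarith
      have e2 : monWeight w x.2 = b := by linarith
      rw [hp3 x.1 e1, hq3 x.2 e2]

lemma TopEq_pow {w : Fin n → ℝ} {a : ℝ} {p q : MvPolynomial (Fin n) ℝ}
    (hp : TopEq w a p q) (k : ℕ) : TopEq w ((k : ℝ) * a) (p ^ k) (q ^ k) := by
  induction k with
  | zero => simpa using TopEq_one w
  | succ m ih =>
      have h := TopEq_mul hp ih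
      rw [pow_succ, pow_succ, mul_comm (p ^ m) p, mul_comm (q ^ m) q]
      push_cast
      have : ((m : ℝ) + 1) * a = a + (m : ℝ) * a := by ring
      rw [this]
      exact h

lemma TopEq_prod {w : Fin n → ℝ} {ι : Type*} (s : Finset ι) (f : ι → ℝ)
    (g g' : ι → MvPolynomial (Fin n) ℝ) (h : ∀ i ∈ s, TopEq w (f i) (g i) (g' i)) :
    TopEq w (∑ i ∈ s, f i) (∏ i ∈ s, g i) (∏ i ∈ s, g' i) := by
  classical
  induction s using Finset.induction with
  | empty => simpa using TopEq_one w
  | insert x s' hx ih =>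
      rw [Finset.sum_insert hx, Finset.prod_insert hx, Finset.prod_insert hx]
      exact TopEq_mul (h x (Finset.mem_insert_self x s'))
        (ih fun i hi => h i (Finset.mem_insert_of_mem hi))

lemma coeff_grPart (w : Fin n → ℝ) (F : Fin n → MvPolynomial (Fin n) ℝ) (j : Fin n)
    (d : Fin n →₀ ℕ) :
    coeff d (grPart w F j) = if monWeight w d = w j then coeff d (F j) else 0 := by
  classical
  unfold grPart
  rw [MvPolynomial.coeff_sum]
  have hcongr : ∀ e ∈ (F j).support,
      coeff d (if monWeight w e = w j then monomial e (coeff e (F j)) else 0)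
        = if e = d then (if monWeight w d = w j then coeff d (F j) else 0) else 0 := by
    intro e _
    by_cases hed : e = d
    · subst hed
      split_ifs with h1 <;> simp_all [coeff_monomial]
    · split_ifs <;> simp [coeff_monomial, hed]
  rw [Finset.sum_congr rfl hcongr, Finset.sum_ite_eq' (F j).support d]
  by_cases hd : d ∈ (F j).support
  · simp [hd]
  · have h0 : coeff d (F j) = 0 := by
      rwa [MvPolynomial.mem_support_iff, not_not] at hd
    simp [hd, h0]

lemma subres_WLE {w : Fin n → ℝ} {F : Fin n → MvPolynomial (Fin n) ℝ}
    (h : Subresonant w F) (j : Fin n) : WLE w (w j) (F j) := h j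

lemma grPart_WLE (w : Fin n → ℝ) (F : Fin n → MvPolynomial (Fin n) ℝ) (j : Fin n) :
    WLE w (w j) (grPart w F j) := by
  intro d hd
  rw [coeff_grPart]
  split_ifs with h
  · exact absurd hd (by rw [h]; exact lt_irrefl _)
  · rfl

lemma grPart_WHom (w : Fin n → ℝ) (F : Fin n → MvPolynomial (Fin n) ℝ) (j : Fin n) :
    WHom w (w j) (grPart w F j) := by
  intro d hd
  rw [coeff_grPart] at hd
  by_cases h : monWeight w d = w j
  · exact h
  · simp [h] at hd

lemma grPart_subres (w : Fin n → ℝ) (F : Fin n → MvPolynomial (Fin n) ℝ) :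
    Subresonant w (grPart w F) := fun j => grPart_WLE w F j

lemma grPart_topEq {w : Fin n → ℝ} {F : Fin n → MvPolynomial (Fin n) ℝ}
    (hF : Subresonant w F) (j : Fin n) : TopEq w (w j) (F j) (grPart w F j) := by
  refine ⟨hF j, grPart_WLE w F j, ?_⟩
  intro d hd
  rw [coeff_grPart, if_pos hd]

lemma bind₁_eq_sum (G : Fin n → MvPolynomial (Fin n) ℝ) (p : MvPolynomial (Fin n) ℝ) :
    bind₁ G p = ∑ e ∈ p.support, C (coeff e p) * ∏ i, (G i) ^ (e i) := by
  rw [MvPolynomial.bind₁, MvPolynomial.aeval_def, MvPolynomial.eval₂_eq']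
  simp [MvPolynomial.algebraMap_eq]

lemma coeff_bind₁ (G : Fin n → MvPolynomial (Fin n) ℝ) (p : MvPolynomial (Fin n) ℝ)
    (d : Fin n →₀ ℕ) :
    coeff d (bind₁ G p) = ∑ e ∈ p.support, coeff e p * coeff d (∏ i, (G i) ^ (e i)) := by
  rw [bind₁_eq_sum, MvPolynomial.coeff_sum]
  simp [MvPolynomial.coeff_C_mul]

lemma prodPow_WLE {w : Fin n → ℝ} {G : Fin n → MvPolynomial (Fin n) ℝ}
    (hG : Subresonant w G) (e : Fin n →₀ ℕ) :
    WLE w (monWeight w e) (∏ i, (G i) ^ (e i)) := by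
  have h := WLE_prod (w := w) Finset.univ (fun i => (e i : ℝ) * w i)
    (fun i => (G i) ^ (e i)) (fun i _ => WLE_pow (hG i) (e i))
  rwa [monWeight_eq_sum]

lemma prodPow_WHom {w : Fin n → ℝ} {G : Fin n → MvPolynomial (Fin n) ℝ}
    (hG : ∀ i, WHom w (w i) (G i)) (e : Fin n →₀ ℕ) :
    WHom w (monWeight w e) (∏ i, (G i) ^ (e i)) := by
  have h := WHom_prod (w := w) Finset.univ (fun i => (e i : ℝ) * w i)
    (fun i => (G i) ^ (e i)) (fun i _ => WHom_pow (hG i) (e i))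
  rwa [monWeight_eq_sum]

lemma prodPow_topEq {w : Fin n → ℝ} {G : Fin n → MvPolynomial (Fin n) ℝ}
    (hG : Subresonant w G) (e : Fin n →₀ ℕ) :
    TopEq w (monWeight w e) (∏ i, (G i) ^ (e i)) (∏ i, (grPart w G i) ^ (e i)) := by
  have h := TopEq_prod (w := w) Finset.univ (fun i => (e i : ℝ) * w i)
    (fun i => (G i) ^ (e i)) (fun i => (grPart w G i) ^ (e i))
    (fun i _ => TopEq_pow (grPart_topEq hG i) (e i))
  rwa [monWeight_eq_sum]

lemma WLE_bind₁ {w : Fin n → ℝ} {G : Fin n → MvPolynomial (Fin n) ℝ} {a : ℝ}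
    {p : MvPolynomial (Fin n) ℝ} (hG : Subresonant w G) (hp : WLE w a p) :
    WLE w a (bind₁ G p) := by
  intro d hd
  rw [coeff_bind₁]
  apply Finset.sum_eq_zero
  intro e _
  by_cases h : a < monWeight w e
  · rw [hp e h, zero_mul]
  · push_neg at h
    rw [prodPow_WLE hG e d (lt_of_le_of_lt h hd), mul_zero]

lemma subres_polyComp {w : Fin n → ℝ} {F G : Fin n → MvPolynomial (Fin n) ℝ}
    (hF : Subresonant w F) (hG : Subresonant w G) : Subresonant w (polyComp F G) :=
  fun j => WLE_bind₁ hG (hF j)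
lemma grPart_support_subset (w : Fin n → ℝ) (F : Fin n → MvPolynomial (Fin n) ℝ) (j : Fin n) :
    (grPart w F j).support ⊆ (F j).support := by
  intro e he
  rw [MvPolynomial.mem_support_iff] at he ⊢
  intro h0
  rw [coeff_grPart, h0] at he
  simp at he

lemma grPart_polyComp {w : Fin n → ℝ} {F G : Fin n → MvPolynomial (Fin n) ℝ}
    (hF : Subresonant w F) (hG : Subresonant w G) :
    grPart w (polyComp F G) = polyComp (grPart w F) (grPart w G) := by
  classical
  funext j
  apply MvPolynomial.ext
  intro d
  rw [coeff_grPart]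
  show _ = coeff d (bind₁ (grPart w G) (grPart w F j))
  by_cases h : monWeight w d = w j
  · rw [if_pos h]
    show coeff d (bind₁ G (F j)) = _
    rw [coeff_bind₁, coeff_bind₁]
    rw [show (∑ e ∈ (grPart w F j).support,
          coeff e (grPart w F j) * coeff d (∏ i, (grPart w G i) ^ (e i)))
        = ∑ e ∈ (F j).support,
          coeff e (grPart w F j) * coeff d (∏ i, (grPart w G i) ^ (e i)) from
      Finset.sum_subset (grPart_support_subset w F j) (by
        intro e _ he
        rw [MvPolynomial.mem_support_iff, not_not] at he
        rw [he, zero_mul])]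
    apply Finset.sum_congr rfl
    intro e _
    rw [coeff_grPart]
    by_cases h1 : monWeight w e = w j
    · rw [if_pos h1]
      congr 1
      exact (prodPow_topEq hG e).2.2 d (by rw [h, h1])
    · rw [if_neg h1, zero_mul]
      by_cases h2 : w j < monWeight w e
      · rw [hF j e h2, zero_mul]
      · push_neg at h2
        have h3 : monWeight w e < monWeight w d := by
          rw [h]; exact lt_of_le_of_ne h2 h1
        rw [prodPow_WLE hG e d h3, mul_zero]
  · rw [if_neg h]
    symm
    rw [coeff_bind₁]
    apply Finset.sum_eq_zero
    intro e he
    rw [MvPolynomial.mem_support_iff] at he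
    have h1 : monWeight w e = w j := grPart_WHom w F j e he
    by_cases h2 : coeff d (∏ i, (grPart w G i) ^ (e i)) = 0
    · rw [h2, mul_zero]
    · exact absurd ((prodPow_WHom (fun i => grPart_WHom w G i) e d h2).trans h1) h

lemma monWeight_single_one (w : Fin n → ℝ) (j : Fin n) :
    monWeight w (Finsupp.single j 1) = w j := by
  rw [monWeight_single]; simp

lemma grPart_idMap (w : Fin n → ℝ) : grPart w (idMap : Fin n → MvPolynomial (Fin n) ℝ) = idMap := by
  funext j
  apply MvPolynomial.ext
  intro d
  rw [coeff_grPart]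
  show _ = coeff d (X j)
  split_ifs with h
  · rfl
  · rw [MvPolynomial.coeff_X']
    rw [if_neg]
    intro hd
    rw [← hd, monWeight_single_one] at h
    exact h rfl

lemma grPart_eq_id_iff {w : Fin n → ℝ} {F : Fin n → MvPolynomial (Fin n) ℝ}
    (hF : Subresonant w F) : grPart w F = idMap ↔ StrictlySubresonant w F := by
  constructor
  · intro h
    refine ⟨hF, ?_⟩
    intro j d hd
    rw [MvPolynomial.coeff_sub]
    rcases lt_or_eq_of_le hd with h1 | h1
    · rw [hF j d h1, MvPolynomial.coeff_X', if_neg, sub_zero]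
      intro he
      rw [← he, monWeight_single_one] at h1
      exact lt_irrefl _ h1
    · have := congrFun h j
      have hc : coeff d (grPart w F j) = coeff d (idMap j : MvPolynomial (Fin n) ℝ) := by rw [this]
      rw [coeff_grPart, if_pos h1.symm] at hc
      rw [hc]
      show coeff d (X j) - coeff d (X j) = 0
      ring
  · intro h
    funext j
    apply MvPolynomial.ext
    intro d
    rw [coeff_grPart]
    show _ = coeff d (X j)
    split_ifs with h1
    · have h2 := h.2 j d (le_of_eq h1.symm)
      rw [MvPolynomial.coeff_sub, sub_eq_zero] at h2
      exact h2
    · rw [MvPolynomial.coeff_X', if_neg]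
      intro hd
      rw [← hd, monWeight_single_one] at h1
      exact h1 rfl

lemma polyComp_assoc (A B C : Fin n → MvPolynomial (Fin n) ℝ) :
    polyComp (polyComp A B) C = polyComp A (polyComp B C) := by
  funext j
  exact MvPolynomial.bind₁_bind₁ B C (A j)

lemma polyComp_id_right (A : Fin n → MvPolynomial (Fin n) ℝ) : polyComp A idMap = A := by
  funext j
  show bind₁ X (A j) = A j
  rw [MvPolynomial.bind₁_X_left]
  rfl

lemma polyComp_id_left (A : Fin n → MvPolynomial (Fin n) ℝ) : polyComp idMap A = A := by
  funext j
  exact MvPolynomial.bind₁_X_right A j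
lemma totalDeg_ge_one {d : Fin n →₀ ℕ} (hd : d ≠ 0) : (1 : ℝ) ≤ ∑ i, (d i : ℝ) := by
  obtain ⟨i, hi⟩ := Finsupp.ne_iff.mp hd
  simp only [Finsupp.coe_zero, Pi.zero_apply] at hi
  have h1 : (1 : ℝ) ≤ (d i : ℝ) := by exact_mod_cast Nat.one_le_iff_ne_zero.mpr hi
  exact le_trans h1 (Finset.single_le_sum (f := fun k => (d k : ℝ))
    (fun k _ => by positivity) (Finset.mem_univ i))

lemma monWeight_neg_one (d : Fin n →₀ ℕ) :
    monWeight (fun _ : Fin n => (-1 : ℝ)) d = -(∑ i, (d i : ℝ)) := by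
  rw [monWeight_eq_sum]
  simp

lemma const_zero_WLE {G : MvPolynomial (Fin n) ℝ} (h : coeff 0 G = 0) :
    WLE (fun _ : Fin n => (-1 : ℝ)) (-1) G := by
  intro d hd
  by_cases h0 : d = 0
  · subst h0; exact h
  · exfalso
    rw [monWeight_neg_one] at hd
    have := totalDeg_ge_one h0
    linarith

lemma prodPow_coeff_single_eq_zero {G : Fin n → MvPolynomial (Fin n) ℝ}
    (hG0 : ∀ k, coeff 0 (G k) = 0) {e : Fin n →₀ ℕ} (he : 2 ≤ ∑ k, e k) (i : Fin n) :
    coeff (Finsupp.single i 1) (∏ k, (G k) ^ (e k)) = 0 := by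
  have h := WLE_prod (w := fun _ : Fin n => (-1 : ℝ)) Finset.univ
    (fun k => (e k : ℝ) * (-1)) (fun k => (G k) ^ (e k))
    (fun k _ => WLE_pow (const_zero_WLE (hG0 k)) (e k))
  apply h
  rw [monWeight_neg_one]
  have hc : (2 : ℝ) ≤ ∑ k, (e k : ℝ) := by exact_mod_cast he
  have hs : ∑ i_1, ((Finsupp.single i 1 : Fin n →₀ ℕ) i_1 : ℝ)
      = monWeight (fun _ : Fin n => (1 : ℝ)) (Finsupp.single i 1) := by
    rw [monWeight_eq_sum]; simp
  have h1 : ∑ i_1, ((Finsupp.single i 1 : Fin n →₀ ℕ) i_1 : ℝ) = 1 := by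
    rw [hs, monWeight_single_one]
  rw [h1]
  have : ∑ k, (e k : ℝ) * (-1) = -(∑ k, (e k : ℝ)) := by
    rw [← Finset.sum_neg_distrib]
    apply Finset.sum_congr rfl
    intro k _; ring
  rw [this]
  linarith

lemma degOne_single {e : Fin n →₀ ℕ} (he : ∑ k, e k = 1) :
    ∃ k, e = Finsupp.single k 1 := by
  classical
  have hne : e ≠ 0 := by
    intro h; subst h; simp at he
  obtain ⟨k, hk⟩ := Finsupp.ne_iff.mp hne
  simp only [Finsupp.coe_zero, Pi.zero_apply] at hk
  have hrest : e k + ∑ m ∈ Finset.univ.erase k, e m = ∑ m, e m :=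
    Finset.add_sum_erase Finset.univ (fun m => e m) (Finset.mem_univ k)
  have hk1 : e k = 1 ∧ ∑ m ∈ Finset.univ.erase k, e m = 0 := by omega
  refine ⟨k, ?_⟩
  ext m
  rcases eq_or_ne m k with rfl | hmk
  · rw [hk1.1, Finsupp.single_eq_same]
  · rw [Finsupp.single_eq_of_ne' (Ne.symm hmk)]
    exact (Finset.sum_eq_zero_iff.mp hk1.2) m (Finset.mem_erase.mpr ⟨hmk, Finset.mem_univ m⟩)

lemma prodPow_single (G : Fin n → MvPolynomial (Fin n) ℝ) (k : Fin n) :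
    ∏ m, (G m) ^ ((Finsupp.single k 1 : Fin n →₀ ℕ) m) = G k := by
  rw [Finset.prod_eq_single k]
  · simp
  · intro m _ hm
    rw [Finsupp.single_eq_of_ne' (Ne.symm hm), pow_zero]
  · intro h; exact absurd (Finset.mem_univ k) h

lemma linPart_polyComp {F G : Fin n → MvPolynomial (Fin n) ℝ}
    (hG0 : ∀ k, coeff 0 (G k) = 0) :
    linPart (polyComp F G) = linPart F * linPart G := by
  classical
  funext j i
  rw [Matrix.mul_apply]
  show coeff (Finsupp.single i 1) (bind₁ G (F j)) = _
  rw [coeff_bind₁]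
  set f : (Fin n →₀ ℕ) → ℝ :=
    fun e => coeff e (F j) * coeff (Finsupp.single i 1) (∏ m, (G m) ^ (e m)) with hf
  set s := (F j).support with hs
  set t := Finset.image (fun k : Fin n => Finsupp.single k (1 : ℕ)) Finset.univ with ht
  have e1 : ∑ e ∈ s, f e = ∑ e ∈ s ∪ t, f e := by
    apply Finset.sum_subset Finset.subset_union_left
    intro e _ hes
    rw [hs, MvPolynomial.mem_support_iff, not_not] at hes
    rw [hf]
    beta_reduce
    simp only [hes, zero_mul]
  have e2 : ∑ e ∈ t, f e = ∑ e ∈ s ∪ t, f e := by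
    apply Finset.sum_subset Finset.subset_union_right
    intro e _ het
    have hnot : ∀ k : Fin n, e ≠ Finsupp.single k 1 := by
      intro k hk
      exact het (ht ▸ Finset.mem_image.mpr ⟨k, Finset.mem_univ k, hk.symm⟩)
    rw [hf]
    beta_reduce
    rcases Nat.lt_or_ge (∑ k, e k) 2 with hlt | hge
    · interval_cases hsum : (∑ k, e k)
      · have he0 : e = 0 := by
          ext m
          exact (Finset.sum_eq_zero_iff.mp hsum) m (Finset.mem_univ m)
        subst he0
        have : ∏ m, (G m) ^ ((0 : Fin n →₀ ℕ) m) = 1 := by simp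
        rw [this, MvPolynomial.coeff_one, if_neg, mul_zero]
        intro hcon
        have := Finsupp.single_eq_zero.mp hcon.symm
        exact one_ne_zero this
      · obtain ⟨k, hk⟩ := degOne_single hsum
        exact absurd hk (hnot k)
    · rw [prodPow_coeff_single_eq_zero hG0 hge, mul_zero]
  have e3 : ∑ e ∈ t, f e = ∑ k, f (Finsupp.single k 1) := by
    rw [ht]
    apply Finset.sum_image
    intro a _ b _ hab
    exact Finsupp.single_left_injective one_ne_zero hab
  rw [e1, ← e2, e3]
  apply Finset.sum_congr rfl
  intro k _
  rw [hf]
  beta_reduce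
  show coeff (Finsupp.single k 1) (F j) * _ = linPart F j k * linPart G k i
  rw [prodPow_single]
  rfl

lemma linPart_idMap : linPart (idMap : Fin n → MvPolynomial (Fin n) ℝ) = 1 := by
  funext j i
  show coeff (Finsupp.single i 1) (X j) = _
  rw [MvPolynomial.coeff_X', Matrix.one_apply]
  by_cases h : j = i
  · subst h; simp
  · rw [if_neg, if_neg h]
    intro hcon
    exact h (Finsupp.single_left_injective one_ne_zero hcon)

lemma grPart_const_zero {w : Fin n → ℝ} (hw : ∀ i, 0 < w i)
    (G : Fin n → MvPolynomial (Fin n) ℝ) (k : Fin n) :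
    coeff 0 (grPart w G k) = 0 := by
  rw [coeff_grPart, if_neg (by rw [monWeight_zero]; exact (hw k).ne)]

lemma linPart_blockTriangular {w : Fin n → ℝ} {F : Fin n → MvPolynomial (Fin n) ℝ}
    (hF : Subresonant w F) :
    Matrix.BlockTriangular (linPart F) (fun i => -w i) := by
  intro i j hij
  have hij' : -w j < -w i := hij
  show coeff (Finsupp.single j 1) (F i) = 0
  apply hF i
  rw [monWeight_single_one]
  linarith

lemma det_linPart_eq_gr {w : Fin n → ℝ} {F : Fin n → MvPolynomial (Fin n) ℝ}
    (hF : Subresonant w F) :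
    (linPart F).det = (linPart (grPart w F)).det := by
  classical
  rw [(linPart_blockTriangular hF).det, (linPart_blockTriangular (grPart_subres w F)).det]
  apply Finset.prod_congr rfl
  intro a _
  congr 1
  apply Matrix.ext
  rintro ⟨i, hi⟩ ⟨k, hk⟩
  simp only [Matrix.toSquareBlock_def]
  show coeff (Finsupp.single k 1) (F i) = coeff (Finsupp.single k 1) (grPart w F i)
  have hi' : -w i = a := hi
  have hk' : -w k = a := hk
  rw [coeff_grPart, monWeight_single_one, if_pos (by linarith)]
end SR18

/-- The linear part of `F ∈ G^{sr}(V)` preserves the filtration and is invertible;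
`D₀` (in the graded sense) is multiplicative with kernel exactly `G^{ssr}(V)`,
which is therefore a normal subgroup. -/
theorem linear_part_homomorphism {n : ℕ} (w : Fin n → ℝ) (hw : ∀ i, 0 < w i)
    (F : Fin n → MvPolynomial (Fin n) ℝ) (hF : F ∈ Gsr w) :
    (∀ lam : ℝ, Submodule.map (Matrix.mulVecLin (linPart F)) (filStep w lam)
      = filStep w lam) ∧
    IsUnit (linPart F) ∧
    (∀ G ∈ Gsr w, grPart w (polyComp F G) = polyComp (grPart w F) (grPart w G)) ∧
    (grPart w F = idMap ↔ F ∈ Gssr w) ∧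
    (∀ H ∈ Gssr w, ∀ G, Subresonant w G → polyComp F G = idMap → polyComp G F = idMap →
      polyComp (polyComp F H) G ∈ Gssr w) := by
  classical
  obtain ⟨hFsub, G, hGsub, hFG, hGF⟩ := hF
  have hgrFG : polyComp (grPart w F) (grPart w G) = idMap := by
    rw [← SR18.grPart_polyComp hFsub hGsub, hFG, SR18.grPart_idMap]
  have hgrGF : polyComp (grPart w G) (grPart w F) = idMap := by
    rw [← SR18.grPart_polyComp hGsub hFsub, hGF, SR18.grPart_idMap]
  have hG0 : ∀ k, MvPolynomial.coeff 0 (grPart w G k) = 0 := SR18.grPart_const_zero hw G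
  have hF0 : ∀ k, MvPolynomial.coeff 0 (grPart w F k) = 0 := SR18.grPart_const_zero hw F
  have hBC : linPart (grPart w F) * linPart (grPart w G) = 1 := by
    rw [← SR18.linPart_polyComp hG0, hgrFG, SR18.linPart_idMap]
  have hCB : linPart (grPart w G) * linPart (grPart w F) = 1 := by
    rw [← SR18.linPart_polyComp hF0, hgrGF, SR18.linPart_idMap]
  have hUnitGr : IsUnit (linPart (grPart w F)) := ⟨⟨_, _, hBC, hCB⟩, rfl⟩
  have hdet : IsUnit (linPart F).det := by
    rw [SR18.det_linPart_eq_gr hFsub]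
    exact (Matrix.isUnit_iff_isUnit_det _).mp hUnitGr
  have hUnit : IsUnit (linPart F) := (Matrix.isUnit_iff_isUnit_det _).mpr hdet
  refine ⟨?_, hUnit, fun G' hG' => SR18.grPart_polyComp hFsub hG'.1, ?_, ?_⟩
  · intro lam
    have hle : Submodule.map (Matrix.mulVecLin (linPart F)) (filStep w lam)
        ≤ filStep w lam := by
      rintro x ⟨v, hv, rfl⟩
      intro i hi
      show Matrix.mulVecLin (linPart F) v i = 0
      rw [Matrix.mulVecLin_apply]
      show ∑ k, linPart F i k * v k = 0
      apply Finset.sum_eq_zero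
      intro k _
      by_cases hk : w k < lam
      · rw [hv k hk, mul_zero]
      · push_neg at hk
        have h0 : linPart F i k = 0 := by
          apply hFsub i
          rw [SR18.monWeight_single_one]
          linarith
        rw [h0, zero_mul]
    obtain ⟨u, hu⟩ := hUnit
    have hAB : linPart F * (↑u⁻¹ : Matrix (Fin n) (Fin n) ℝ) = 1 := by
      rw [← hu]; exact u.mul_inv
    have hBA : (↑u⁻¹ : Matrix (Fin n) (Fin n) ℝ) * linPart F = 1 := by
      rw [← hu]; exact u.inv_mul
    let e : (Fin n → ℝ) ≃ₗ[ℝ] (Fin n → ℝ) := LinearEquiv.ofLinear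
      (Matrix.mulVecLin (linPart F))
      (Matrix.mulVecLin (↑u⁻¹ : Matrix (Fin n) (Fin n) ℝ))
      (by rw [← Matrix.mulVecLin_mul, hAB, Matrix.mulVecLin_one])
      (by rw [← Matrix.mulVecLin_mul, hBA, Matrix.mulVecLin_one])
    have hmap : Submodule.map (Matrix.mulVecLin (linPart F)) (filStep w lam)
        = Submodule.map (e : (Fin n → ℝ) →ₗ[ℝ] (Fin n → ℝ)) (filStep w lam) := rfl
    apply Submodule.eq_of_le_of_finrank_le hle
    rw [hmap, LinearEquiv.finrank_map_eq]
  · rw [SR18.grPart_eq_id_iff hFsub]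
    exact ⟨fun h => ⟨⟨hFsub, G, hGsub, hFG, hGF⟩, h⟩, fun h => h.2⟩
  · intro H hH G' hG'sub hFG' hGF'
    obtain ⟨⟨hHsub, H', hH'sub, hHH', hH'H⟩, hHstrict⟩ := hH
    have hsub : Subresonant w (polyComp (polyComp F H) G') :=
      SR18.subres_polyComp (SR18.subres_polyComp hFsub hHsub) hG'sub
    refine ⟨⟨hsub, polyComp (polyComp F H') G',
      SR18.subres_polyComp (SR18.subres_polyComp hFsub hH'sub) hG'sub, ?_, ?_⟩, ?_⟩
    · rw [SR18.polyComp_assoc (polyComp F H) G' (polyComp (polyComp F H') G'),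
        ← SR18.polyComp_assoc G' (polyComp F H') G',
        ← SR18.polyComp_assoc G' F H', hGF', SR18.polyComp_id_left,
        ← SR18.polyComp_assoc (polyComp F H) H' G',
        SR18.polyComp_assoc F H H', hHH', SR18.polyComp_id_right]
      exact hFG'
    · rw [SR18.polyComp_assoc (polyComp F H') G' (polyComp (polyComp F H) G'),
        ← SR18.polyComp_assoc G' (polyComp F H) G',
        ← SR18.polyComp_assoc G' F H, hGF', SR18.polyComp_id_left,
        ← SR18.polyComp_assoc (polyComp F H') H G',
        SR18.polyComp_assoc F H' H, hH'H, SR18.polyComp_id_right]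
      exact hFG'
    · rw [← SR18.grPart_eq_id_iff hsub,
        SR18.grPart_polyComp (SR18.subres_polyComp hFsub hHsub) hG'sub,
        SR18.grPart_polyComp hFsub hHsub,
        (SR18.grPart_eq_id_iff hHsub).mpr hHstrict,
        SR18.polyComp_id_right,
        ← SR18.grPart_polyComp hFsub hG'sub, hFG', SR18.grPart_idMap]

end
end
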